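/- arXiv:1107.0133 — 2 statements merged into one kernel-verified Lean document; each statement's English description precedes it below -/
import Mathlib

section
/- Let G and K be finite groups and f : G → K a map such that the number of pairs (x,y) ∈ G × G with f(x·y) = f(x)·f(y) is strictly greater than (7/9)·|G|². Define h(x) to be a value attaining the maximum, over z ∈ K, of #{y ∈ G : f(x·y)·f(y)⁻¹ = z}. Then for every x ∈ G, the number of y ∈ G with f(x·y)·f(y)⁻¹ = h(x) is strictly greater than (2/3)·|G|. -/
/-
Fix `x` and put `g y = f (x * y) * (f y)⁻¹`. If both `(x * y, y⁻¹ * z)` and `(y, y⁻¹ * z)` are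
pairs on which `f` is multiplicative, then `g y = g z`. As the shears `(y, z) ↦ (x * y, y⁻¹ * z)`
and `(y, z) ↦ (y, y⁻¹ * z)` are bijections of `G × G`, fewer than `2 · (2/9)|G|²` pairs `(y, z)`
have `g y ≠ g z`, i.e. `g` has more than `(5/9)|G|²` collisions. If `M` is the largest fibre of
`g`, the collision count `∑ N_z²` is at most `|G| M` and at most `M² + (|G| - M)²`; the smaller
of the two is at most `(5/9)|G|²` unless `3M > 2|G|`.
-/

open Finset

lemma two_mul_lt_three_mul_of_collision_bounds {n M C : ℕ} (hMn : M ≤ n)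
    (hC : 5 * n ^ 2 < 9 * C) (hC₁ : C ≤ n * M) (hC₂ : C ≤ M ^ 2 + (n - M) ^ 2) :
    2 * n < 3 * M := by
  obtain ⟨d, rfl⟩ := Nat.exists_eq_add_of_le hMn
  rw [Nat.add_sub_cancel_left] at hC₂
  by_contra! h
  -- `9 C > 5 n²` against `C ≤ M² + d²` says `(2M - d)(M - 2d) > 0`, but `2M > d` and `M ≤ 2d`.
  nlinarith [mul_nonneg (show (0 : ℤ) ≤ 2 * M - d by nlinarith) (show (0 : ℤ) ≤ 2 * d - M by omega)]

section Collisions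

variable {α β : Type*} [Fintype α] [DecidableEq β] (g : α → β)

lemma card_collisions_eq_sum_card_fiber :
    #{p : α × α | g p.1 = g p.2} = ∑ a, #{b | g b = g a} := by
  simp only [card_filter, Fintype.sum_prod_type, eq_comm]

lemma card_collisions_le_card_mul {M : ℕ} (hM : ∀ z, #{b | g b = z} ≤ M) :
    #{p : α × α | g p.1 = g p.2} ≤ Fintype.card α * M := by
  rw [card_collisions_eq_sum_card_fiber]
  calc ∑ a, #{b | g b = g a} ≤ ∑ _a : α, M := sum_le_sum fun a _ => hM (g a)
  _ = _ := by simp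

lemma card_collisions_le_sq_add_sq (z : β) :
    #{p : α × α | g p.1 = g p.2} ≤
      #{b | g b = z} ^ 2 + (Fintype.card α - #{b | g b = z}) ^ 2 := by
  have hcompl : #{b | g b ≠ z} = Fintype.card α - #{b | g b = z} := by
    rw [← card_univ, ← card_filter_add_card_filter_not (s := univ) (fun b => g b = z)]
    simp only [ne_eq, add_tsub_cancel_left]
  rw [card_collisions_eq_sum_card_fiber, ← sum_filter_add_sum_filter_not univ (fun a => g a = z),
    ← hcompl, sq, sq]
  gcongr
  · rw [sum_congr rfl fun a ha => by rw [(mem_filter.mp ha).2], sum_const, smul_eq_mul]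
  · calc ∑ a ∈ {a | g a ≠ z}, #{b | g b = g a}
        ≤ ∑ _a ∈ {a | g a ≠ z}, #{b | g b ≠ z} := by
          refine sum_le_sum fun a ha => card_le_card fun b hb => ?_
          simp only [mem_filter, mem_univ, true_and] at ha hb ⊢
          rwa [hb]
      _ = _ := by rw [sum_const, smul_eq_mul]

lemma two_mul_card_lt_three_mul_card_fiber {z₀ : β}
    (hmax : ∀ z, #{b | g b = z} ≤ #{b | g b = z₀})
    (hC : 5 * Fintype.card α ^ 2 < 9 * #{p : α × α | g p.1 = g p.2}) :
    2 * Fintype.card α < 3 * #{b | g b = z₀} :=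
  two_mul_lt_three_mul_of_collision_bounds (card_le_univ _) hC
    (card_collisions_le_card_mul g hmax) (card_collisions_le_sq_add_sq g z₀)

end Collisions

section Group

variable {G K : Type*} [Group G] [Group K] [Fintype G] [DecidableEq K]

lemma card_filter_ne_le_two_mul_card_filter_mul_ne (f : G → K) (x : G) :
    #{p : G × G | f (x * p.1) * (f p.1)⁻¹ ≠ f (x * p.2) * (f p.2)⁻¹} ≤
      2 * #{p : G × G | f (p.1 * p.2) ≠ f p.1 * f p.2} := by
  classical
  set bad : G × G → Prop := fun p => f (p.1 * p.2) ≠ f p.1 * f p.2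
  let e₁ := Equiv.prodShear (Equiv.mulLeft x) fun y : G => Equiv.mulLeft y⁻¹
  let e₂ := Equiv.prodShear (Equiv.refl G) fun y : G => Equiv.mulLeft y⁻¹
  have hcard : ∀ e : G × G ≃ G × G, #{p | bad (e p)} = #{p | bad p} := fun e =>
    card_equiv e (by simp)
  have hbad : ∀ p : G × G, f (x * p.1) * (f p.1)⁻¹ ≠ f (x * p.2) * (f p.2)⁻¹ →
      bad (e₁ p) ∨ bad (e₂ p) := by
    rintro ⟨y, z⟩ hne
    refine not_and_or.mp fun ⟨h₁, h₂⟩ => hne ?_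
    have h₁ : f (x * y * (y⁻¹ * z)) = f (x * y) * f (y⁻¹ * z) := h₁
    have h₂ : f (y * (y⁻¹ * z)) = f y * f (y⁻¹ * z) := h₂
    rw [mul_assoc, mul_inv_cancel_left] at h₁
    rw [mul_inv_cancel_left] at h₂
    rw [h₁, h₂]
    group
  calc _ ≤ #(({p | bad (e₁ p)} : Finset _) ∪ ({p | bad (e₂ p)} : Finset _)) :=
        card_le_card fun p hp => by simpa using hbad p (by simpa using hp)
    _ ≤ #{p | bad (e₁ p)} + #{p | bad (e₂ p)} := card_union_le _ _
    _ = _ := by rw [hcard, hcard, two_mul]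

end Group

theorem stmt_1_general {G K : Type*} [Group G] [Group K] [Finite G]
    (f : G → K) (h : G → K)
    (hf : 9 * Nat.card {p : G × G // f (p.1 * p.2) = f p.1 * f p.2} > 7 * (Nat.card G) ^ 2)
    (hmaj : ∀ x : G, ∀ z : K,
      Nat.card {y : G // f (x * y) * (f y)⁻¹ = z} ≤
        Nat.card {y : G // f (x * y) * (f y)⁻¹ = h x}) :
    ∀ x : G, 3 * Nat.card {y : G // f (x * y) * (f y)⁻¹ = h x} > 2 * Nat.card G := by
  cases nonempty_fintype G
  classical
  intro x
  simp only [Nat.card_eq_fintype_card, Fintype.card_subtype] at hf hmaj ⊢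
  refine two_mul_card_lt_three_mul_card_fiber _ (hmaj x) ?_
  have hnc := card_filter_ne_le_two_mul_card_filter_mul_ne f x
  have hgood := card_filter_add_card_filter_not (s := (univ : Finset (G × G)))
    fun p => f (p.1 * p.2) = f p.1 * f p.2
  have hcoll := card_filter_add_card_filter_not (s := (univ : Finset (G × G)))
    fun p => f (x * p.1) * (f p.1)⁻¹ = f (x * p.2) * (f p.2)⁻¹
  simp only [card_univ, Fintype.card_prod, ← sq, ne_eq] at hnc hgood hcoll
  omega

theorem stmt_1 {G K : Type*} [Group G] [Group K] [Finite G] [Finite K]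
    (f : G → K) (h : G → K)
    (hf : 9 * Nat.card {p : G × G // f (p.1 * p.2) = f p.1 * f p.2} > 7 * (Nat.card G) ^ 2)
    (hmaj : ∀ x : G, ∀ z : K,
      Nat.card {y : G // f (x * y) * (f y)⁻¹ = z} ≤
        Nat.card {y : G // f (x * y) * (f y)⁻¹ = h x}) :
    ∀ x : G, 3 * Nat.card {y : G // f (x * y) * (f y)⁻¹ = h x} > 2 * Nat.card G :=
  stmt_1_general f h hf hmaj
end

section
/- Let G and K be finite groups with |G| ≤ |K|. Define the overlap between G and K as the maximum over all sets S with |S| ≥ |K| and injections γ : G → S, κ : K → S of the number of pairs (x,y) ∈ G × G such that there exist x', y' ∈ K with γ(x) = κ(x'), γ(y) = κ(y'), and γ(x·y) = κ(x'·y'). If G is not isomorphic to any subgroup of K, then the overlap between G and K is at most (7/9)·|G|². -/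
/-!
Let `f` be a partial injection `G → K`, multiplicative on more than `7/9` of the pairs. For each
`x`, every `y` at which `f` is defined at `y` and `x * y` votes for `f (x * y) * (f y)⁻¹` as the
value of a homomorphism at `x`. If `f` is multiplicative at `(x * y, y⁻¹ * z)` and `(y, y⁻¹ * z)`,
then `y` and `z` cast the same vote, so fewer than `2/9` of the pairs `(y, z)` fail to agree.
Hence the sum of the squared vote counts exceeds `5/9 · |G|²`, which forces a vote with a
majority of more than `2/3`. Any three `2/3`-majorities meet, and this makes the winning
votes a homomorphism; it is injective because `f` is.
-/

open Finset Pointwise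

namespace Finset

lemma inter_inter_nonempty_of_two_mul_lt_three_mul {α : Type*} [Fintype α] [DecidableEq α]
    {s t u : Finset α} (hs : 2 * Fintype.card α < 3 * #s) (ht : 2 * Fintype.card α < 3 * #t)
    (hu : 2 * Fintype.card α < 3 * #u) : (s ∩ t ∩ u).Nonempty := by
  refine inter_nonempty_of_card_lt_card_add_card (subset_univ _) (subset_univ _) ?_
  have := card_union_add_card_inter s t
  have := card_le_univ (s ∪ t)
  rw [card_univ]
  omega

lemma exists_two_mul_lt_three_mul_of_sum_sq {ι : Type*} [DecidableEq ι] (s : Finset ι)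
    (c : ι → ℕ) (n : ℕ) (hsum : ∑ i ∈ s, c i ≤ n) (hsq : 5 * n ^ 2 < 9 * ∑ i ∈ s, c i ^ 2) :
    ∃ i ∈ s, 2 * n < 3 * c i := by
  obtain ⟨i, hi, hmax⟩ := s.exists_max_image c
    (nonempty_iff_ne_empty.2 fun h => by simp [h] at hsq)
  refine ⟨i, hi, ?_⟩
  set r := ∑ j ∈ s.erase i, c j
  have hsplit : c i + r = ∑ j ∈ s, c j := add_sum_erase s c hi
  have hsq_le_mul : ∑ j ∈ s, c j ^ 2 ≤ c i * (c i + r) := by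
    calc ∑ j ∈ s, c j ^ 2 ≤ ∑ j ∈ s, c i * c j := sum_le_sum fun j hj => by
            rw [sq]; exact Nat.mul_le_mul_right _ (hmax j hj)
      _ = c i * (c i + r) := by rw [← mul_sum, hsplit]
  have hsq_le_sq_add : ∑ j ∈ s, c j ^ 2 ≤ c i ^ 2 + r ^ 2 := by
    rw [← add_sum_erase s _ hi]
    exact Nat.add_le_add_left (sum_sq_le_sq_sum_of_nonneg fun _ _ => Nat.zero_le _) _
  by_contra! hle
  rcases le_or_gt (3 * c i) n with hsmall | hmid
  · nlinarith
  · -- `9 (q² + (n - q)²) - 5 n² = 2 (3 q - n) (3 q - 2 n)` for `q = c i`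
    have hr : r ≤ n - c i := by omega
    have hr2 : r ^ 2 ≤ (n - c i) ^ 2 := Nat.pow_le_pow_left hr 2
    zify [show c i ≤ n by omega] at hr2 hle hmid hsq hsq_le_sq_add
    nlinarith [mul_nonneg (sub_nonneg.2 hle) (sub_nonneg.2 hmid.le)]

end Finset

section PartialHom

variable {G K : Type*} [Group G] [Group K] (f : G → Option K)

def IsMulAt (a b : G) : Prop :=
  ∃ u v, f a = some u ∧ f b = some v ∧ f (a * b) = some (u * v)

instance [Fintype K] [DecidableEq K] (a b : G) : Decidable (IsMulAt f a b) := by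
  unfold IsMulAt; infer_instance

def vote (x y : G) : Option K :=
  Option.map₂ (fun u v => u * v⁻¹) (f (x * y)) (f y)

variable {f}

lemma vote_eq_some_iff {x y : G} {k : K} :
    vote f x y = some k ↔ ∃ u v, f (x * y) = some u ∧ f y = some v ∧ u * v⁻¹ = k := by
  simp [vote]

lemma exists_vote_eq_some_of_isMulAt {x y z : G} (h₁ : IsMulAt f (x * y) (y⁻¹ * z))
    (h₂ : IsMulAt f y (y⁻¹ * z)) : ∃ k, vote f x y = some k ∧ vote f x z = some k := by
  obtain ⟨u, w, hu, hw, huw⟩ := h₁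
  obtain ⟨v, w', hv, hw', hvw⟩ := h₂
  obtain rfl : w = w' := Option.some_injective _ (hw.symm.trans hw')
  rw [mul_assoc, mul_inv_cancel_left] at huw
  rw [mul_inv_cancel_left] at hvw
  refine ⟨u * v⁻¹, vote_eq_some_iff.2 ⟨u, v, hu, hv, rfl⟩,
    vote_eq_some_iff.2 ⟨u * w, v * w, huw, hvw, by group⟩⟩

variable [Fintype G] [DecidableEq K]

variable (f) in
def voters (x : G) (k : K) : Finset G := {y | vote f x y = some k}

lemma mem_voters {x y : G} {k : K} : y ∈ voters f x k ↔ vote f x y = some k := by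
  simp [voters]

lemma map_mul_of_two_mul_lt_three_mul_card_voters {g : G → K}
    (hg : ∀ x, 2 * Fintype.card G < 3 * #(voters f x (g x))) (a b : G) :
    g (a * b) = g a * g b := by
  classical
  obtain ⟨y, hy⟩ := inter_inter_nonempty_of_two_mul_lt_three_mul (hg (a * b)) (hg b)
    (u := b⁻¹ • voters f a (g a)) (by rw [card_smul_finset]; exact hg a)
  simp only [mem_inter, mem_inv_smul_finset_iff, smul_eq_mul, mem_voters, vote_eq_some_iff] at hy
  obtain ⟨⟨⟨u, v, hu, hv, hab⟩, ⟨u', v', hu', hv', hb⟩⟩, ⟨u'', v'', hu'', hv'', ha⟩⟩ := hy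
  rw [mul_assoc] at hu
  obtain rfl : v' = v := Option.some_injective _ (hv'.symm.trans hv)
  obtain rfl : u'' = u := Option.some_injective _ (hu''.symm.trans hu)
  obtain rfl : v'' = u' := Option.some_injective _ (hv''.symm.trans hu')
  rw [← hab, ← ha, ← hb]
  group

lemma injective_of_two_mul_lt_three_mul_card_voters
    (hf : ∀ a b k, f a = some k → f b = some k → a = b) {g : G → K}
    (hg : ∀ x, 2 * Fintype.card G < 3 * #(voters f x (g x))) : Function.Injective g := by
  classical
  intro a b hab
  have hcard : #(univ : Finset G) < #(voters f a (g a)) + #(voters f b (g b)) := by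
    have := hg a
    have := hg b
    rw [card_univ]
    omega
  obtain ⟨y, hy⟩ := inter_nonempty_of_card_lt_card_add_card (subset_univ _) (subset_univ _) hcard
  simp only [mem_inter, mem_voters, vote_eq_some_iff] at hy
  obtain ⟨⟨u, v, hu, hv, ha⟩, ⟨u', v', hu', hv', hb⟩⟩ := hy
  obtain rfl : v' = v := Option.some_injective _ (hv'.symm.trans hv)
  obtain rfl : u' = u := mul_right_cancel (hb.trans (ha.trans hab).symm)
  exact mul_right_cancel (hf _ _ _ hu hu')

variable [Fintype K]

lemma sum_card_voters_le (x : G) : ∑ k, #(voters f x k) ≤ Fintype.card G := by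
  have h := card_eq_sum_card_fiberwise (f := vote f x) (s := univ) (t := univ) (by simp)
  rw [Fintype.sum_option, card_univ] at h
  simp only [voters]
  omega

lemma sq_card_le_sum_sq_card_voters_add (x : G) :
    Fintype.card G ^ 2 ≤
      ∑ k, #(voters f x k) ^ 2 + 2 * #{p : G × G | ¬IsMulAt f p.1 p.2} := by
  classical
  set bad : Finset (G × G) := {p | ¬IsMulAt f p.1 p.2}
  let e₁ : G × G ≃ G × G := (Equiv.mulLeft x).prodShear fun y => Equiv.mulLeft y⁻¹
  let e₂ : G × G ≃ G × G := (Equiv.refl G).prodShear fun y => Equiv.mulLeft y⁻¹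
  have hcover : (univ : Finset (G × G)) ⊆ (univ.biUnion fun k => voters f x k ×ˢ voters f x k) ∪
      bad.map e₁.symm.toEmbedding ∪ bad.map e₂.symm.toEmbedding := by
    rintro ⟨y, z⟩ -
    simp only [mem_union, mem_map_equiv, Equiv.symm_symm, bad, mem_filter, mem_univ, true_and]
    by_cases h₁ : IsMulAt f (x * y) (y⁻¹ * z)
    · by_cases h₂ : IsMulAt f y (y⁻¹ * z)
      · obtain ⟨k, hy, hz⟩ := exists_vote_eq_some_of_isMulAt h₁ h₂
        exact .inl <| .inl <| mem_biUnion.2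
          ⟨k, mem_univ _, mem_product.2 ⟨mem_voters.2 hy, mem_voters.2 hz⟩⟩
      · exact .inr h₂
    · exact .inl <| .inr h₁
  calc Fintype.card G ^ 2 = #(univ : Finset (G × G)) := by simp [sq]
    _ ≤ #(univ.biUnion fun k => voters f x k ×ˢ voters f x k) + #bad + #bad := by
      grw [card_le_card hcover, card_union_le, card_union_le, card_map, card_map]
    _ ≤ ∑ k, #(voters f x k) ^ 2 + 2 * #bad := by
      grw [card_biUnion_le]
      simp only [card_product, sq]
      omega

lemma exists_two_mul_lt_three_mul_card_voters
    (hbad : 9 * #{p : G × G | ¬IsMulAt f p.1 p.2} < 2 * Fintype.card G ^ 2) (x : G) :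
    ∃ k, 2 * Fintype.card G < 3 * #(voters f x k) := by
  obtain ⟨k, -, hk⟩ := exists_two_mul_lt_three_mul_of_sum_sq univ (fun k => #(voters f x k)) _
    (sum_card_voters_le x)
    (by have := sq_card_le_sum_sq_card_voters_add (f := f) x; omega)
  exact ⟨k, hk⟩

end PartialHom

theorem exists_injective_monoidHom_of_isMulAt {G K : Type*} [Group G] [Group K] [Finite G]
    [Finite K] (f : G → Option K) (hf : ∀ a b k, f a = some k → f b = some k → a = b)
    (h : 7 * Nat.card G ^ 2 < 9 * Nat.card {p : G × G // IsMulAt f p.1 p.2}) :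
    ∃ ψ : G →* K, Function.Injective ψ := by
  classical
  have := Fintype.ofFinite G
  have := Fintype.ofFinite K
  have hbad : 9 * #{p : G × G | ¬IsMulAt f p.1 p.2} < 2 * Fintype.card G ^ 2 := by
    have := card_filter_add_card_filter_not (s := univ) fun p : G × G => IsMulAt f p.1 p.2
    rw [Nat.card_eq_fintype_card, Nat.card_eq_fintype_card, Fintype.card_subtype] at h
    rw [card_univ, Fintype.card_prod, ← sq] at this
    omega
  choose g hg using exists_two_mul_lt_three_mul_card_voters hbad
  exact ⟨.mk' g (map_mul_of_two_mul_lt_three_mul_card_voters hg),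
    injective_of_two_mul_lt_three_mul_card_voters hf hg⟩

theorem stmt_11_general {G K : Type*} [Group G] [Group K] [Finite G] [Finite K]
    (hsub : ¬ ∃ ψ : G →* K, Function.Injective ψ) :
    ∀ (S : Type) (γ : G → S) (κ : K → S), Nat.card S ≥ Nat.card K →
      Function.Injective γ → Function.Injective κ →
      9 * Nat.card {p : G × G // ∃ x' y' : K,
          γ p.1 = κ x' ∧ γ p.2 = κ y' ∧ γ (p.1 * p.2) = κ (x' * y')}
        ≤ 7 * (Nat.card G) ^ 2 := by
  intro S γ κ _ hγ hκ
  by_contra! hcount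
  have hf : ∀ a k, Function.partialInv κ (γ a) = some k ↔ γ a = κ k := fun a k =>
    (hκ.isPartialInv k (γ a)).trans eq_comm
  refine hsub (exists_injective_monoidHom_of_isMulAt (Function.partialInv κ ∘ γ)
    (fun a b k ha hb => hγ ?_) ?_)
  · rw [(hf a k).1 ha, (hf b k).1 hb]
  · simpa only [IsMulAt, Function.comp_apply, hf] using hcount

theorem stmt_11 {G K : Type*} [Group G] [Group K] [Finite G] [Finite K]
    (hGK : Nat.card G ≤ Nat.card K)
    (hsub : ¬ ∃ ψ : G →* K, Function.Injective ψ) :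
    ∀ (S : Type) (γ : G → S) (κ : K → S), Nat.card S ≥ Nat.card K →
      Function.Injective γ → Function.Injective κ →
      9 * Nat.card {p : G × G // ∃ x' y' : K,
          γ p.1 = κ x' ∧ γ p.2 = κ y' ∧ γ (p.1 * p.2) = κ (x' * y')}
        ≤ 7 * (Nat.card G) ^ 2 :=
  stmt_11_general hsub
end
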